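/- arXiv:2202.08600 — 6 statements merged into one kernel-verified Lean document; each statement's English description precedes it below -/
import Mathlib

section
/- There is no universal quantum cloning machine: for every unitary 4×4 complex matrix U (acting on ℂ²⊗ℂ²) and every unit vector φ ∈ ℂ², it is not the case that U(ψ⊗φ) = ψ⊗ψ for all unit vectors ψ ∈ ℂ². Equivalently, there exist unit vectors ψ ∈ ℂ² with U(ψ⊗φ) ≠ ψ⊗ψ. -/
open Matrix

/-- Tensor product of two qubit state vectors: `(ψ ⊗ φ)(i,j) = ψ i * φ j`. -/
def tensor2 (ψ φ : Fin 2 → ℂ) : Fin 2 × Fin 2 → ℂ :=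
  fun p => ψ p.1 * φ p.2

/-- **No-cloning theorem**: there is no universal quantum cloning machine.  For every
unitary `U` on `ℂ² ⊗ ℂ²` and every unit vector `φ ∈ ℂ²`, it is not the case that
`U (ψ ⊗ φ) = ψ ⊗ ψ` for all unit vectors `ψ ∈ ℂ²`. -/
theorem no_cloning
    (U : Matrix (Fin 2 × Fin 2) (Fin 2 × Fin 2) ℂ)
    (hU : U * Uᴴ = 1 ∧ Uᴴ * U = 1)
    (φ : Fin 2 → ℂ) (hφ : ∑ i, ‖φ i‖ ^ 2 = 1) :
    ¬ (∀ ψ : Fin 2 → ℂ, (∑ i, ‖ψ i‖ ^ 2 = 1) →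
        U.mulVec (tensor2 ψ φ) = tensor2 ψ ψ) := by
  intro h
  set c : ℂ := (((Real.sqrt 2)⁻¹ : ℝ) : ℂ) with hc
  have hs2 : (0:ℝ) < Real.sqrt 2 := Real.sqrt_pos.mpr (by norm_num)
  have hcnorm : ‖c‖ = (Real.sqrt 2)⁻¹ := by
    rw [hc, Complex.norm_real, Real.norm_eq_abs, abs_of_pos (by positivity)]
  have hcsq : (‖c‖:ℝ) ^ 2 = 1/2 := by
    rw [hcnorm]
    rw [inv_pow, Real.sq_sqrt (by norm_num : (2:ℝ) ≥ 0)]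
    norm_num
  have h0 := h ![1, 0] (by simp [Fin.sum_univ_two])
  have h1 := h ![0, 1] (by simp [Fin.sum_univ_two])
  have hp := h ![c, c] (by
    simp only [Fin.sum_univ_two, Matrix.cons_val_zero, Matrix.cons_val_one, Matrix.head_cons]
    rw [hcsq]; norm_num)
  -- tensor2 ![c,c] φ = c • (tensor2 ![1,0] φ + tensor2 ![0,1] φ)
  have hdecomp : tensor2 ![c, c] φ
      = c • (tensor2 ![1, 0] φ + tensor2 ![0, 1] φ) := by
    funext p
    simp only [tensor2, Pi.smul_apply, Pi.add_apply, smul_eq_mul]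
    fin_cases p <;> simp <;> ring
  have key : tensor2 ![c, c] ![c, c]
      = c • (tensor2 ![1,0] ![1,0] + tensor2 ![0,1] ![0,1]) := by
    rw [← hp, hdecomp, mulVec_smul, mulVec_add, h0, h1]
  have := congrFun key (0, 1)
  simp only [tensor2, Pi.smul_apply, Pi.add_apply, smul_eq_mul] at this
  norm_num at this
  -- this : c * c = 0
  have hc0 : c ≠ 0 := by
    rw [hc]
    simp only [ne_eq, Complex.ofReal_eq_zero, inv_eq_zero]
    positivity
  exact hc0 this
end

section
/- Quantum teleportation is correct: for every qubit state ψ = α|0⟩ + β|1⟩ ∈ ℂ², the three-qubit state obtained by applying first CNOT on qubits 1,2 (control 1, target 2) and then the Hadamard gate H on qubit 1 to the input ψ⊗Φ⁺ satisfies (H⊗I⊗I)(CNOT⊗I)(ψ⊗Φ⁺) = (1/2) Σ_{a,b∈{0,1}} |a⟩⊗|b⟩⊗(X^b Z^a ψ). Consequently, applying the recovery operation Z^a X^b to the third qubit component associated with measurement outcome (a,b) returns exactly ψ, since Z^a X^b (X^b Z^a ψ) = ψ. -/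
open Matrix

noncomputable section

/-- Standard basis kets of `ℂ²`: `ket a = |a⟩`. -/
def ket (a : Fin 2) : Fin 2 → ℂ := fun i => if i = a then 1 else 0

/-- Pauli `X` gate. -/
def Xg : Matrix (Fin 2) (Fin 2) ℂ := !![0, 1; 1, 0]

/-- Pauli `Z` gate. -/
def Zg : Matrix (Fin 2) (Fin 2) ℂ := !![1, 0; 0, -1]

/-- Hadamard gate `H = (1/√2)[[1,1],[1,-1]]`. -/
def Hg : Matrix (Fin 2) (Fin 2) ℂ := (Real.sqrt 2 : ℂ)⁻¹ • !![1, 1; 1, -1]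

/-- CNOT gate on `ℂ² ⊗ ℂ²`: `|a⟩⊗|b⟩ ↦ |a⟩⊗|b + a⟩`, i.e. `|0⟩⊗v ↦ |0⟩⊗v` and
`|1⟩⊗v ↦ |1⟩⊗(Xv)`. -/
def CNOT : Matrix (Fin 2 × Fin 2) (Fin 2 × Fin 2) ℂ :=
  fun p q => if p.1 = q.1 ∧ p.2 = q.2 + q.1 then 1 else 0

/-- Tensor product of two qubit vectors. -/
def tens2 (u v : Fin 2 → ℂ) : Fin 2 × Fin 2 → ℂ := fun p => u p.1 * v p.2

/-- Tensor product of a one-qubit vector with a two-qubit vector. -/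
def tens12 (u : Fin 2 → ℂ) (v : Fin 2 × Fin 2 → ℂ) : Fin 2 × Fin 2 × Fin 2 → ℂ :=
  fun p => u p.1 * v p.2

/-- Tensor product of three one-qubit vectors. -/
def tens3 (u v w : Fin 2 → ℂ) : Fin 2 × Fin 2 × Fin 2 → ℂ :=
  fun p => u p.1 * v p.2.1 * w p.2.2

/-- The EPR pair `Φ⁺ = (1/√2)(|0⟩⊗|0⟩ + |1⟩⊗|1⟩)`. -/
def PhiPlus : Fin 2 × Fin 2 → ℂ :=
  (Real.sqrt 2 : ℂ)⁻¹ • (tens2 (ket 0) (ket 0) + tens2 (ket 1) (ket 1))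

/-- A two-qubit gate `A` acting on qubits 1 and 2 of a three-qubit system, i.e. `A ⊗ I`. -/
def onQubits12 (A : Matrix (Fin 2 × Fin 2) (Fin 2 × Fin 2) ℂ) :
    Matrix (Fin 2 × Fin 2 × Fin 2) (Fin 2 × Fin 2 × Fin 2) ℂ :=
  fun p q => A (p.1, p.2.1) (q.1, q.2.1) * (if p.2.2 = q.2.2 then 1 else 0)

/-- A one-qubit gate `A` acting on qubit 1 of a three-qubit system, i.e. `A ⊗ I ⊗ I`. -/
def onQubit1 (A : Matrix (Fin 2) (Fin 2) ℂ) :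
    Matrix (Fin 2 × Fin 2 × Fin 2) (Fin 2 × Fin 2 × Fin 2) ℂ :=
  fun p q => A p.1 q.1 * (if p.2 = q.2 then 1 else 0)

set_option maxHeartbeats 2000000 in
/-- **Correctness of quantum teleportation**: for every qubit state `ψ ∈ ℂ²`,
`(H⊗I⊗I)(CNOT⊗I)(ψ⊗Φ⁺) = (1/2) Σ_{a,b} |a⟩⊗|b⟩⊗(Xᵇ Zᵃ ψ)`, and the recovery operation
satisfies `Zᵃ Xᵇ (Xᵇ Zᵃ ψ) = ψ` for each measurement outcome `(a,b)`. -/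
theorem quantum_teleportation (ψ : Fin 2 → ℂ) (hψ : ∑ i, ‖ψ i‖ ^ 2 = 1) :
    (onQubit1 Hg).mulVec ((onQubits12 CNOT).mulVec (tens12 ψ PhiPlus)) =
      ((1 : ℂ) / 2) • ∑ a : Fin 2, ∑ b : Fin 2,
        tens3 (ket a) (ket b) ((Xg ^ (b : ℕ) * Zg ^ (a : ℕ)).mulVec ψ) ∧
    ∀ a b : Fin 2,
      (Zg ^ (a : ℕ) * Xg ^ (b : ℕ)).mulVec ((Xg ^ (b : ℕ) * Zg ^ (a : ℕ)).mulVec ψ) = ψ := by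
  have hs : ((Real.sqrt 2 : ℂ))⁻¹ * ((Real.sqrt 2 : ℂ))⁻¹ = 1/2 := by
    rw [← mul_inv]
    norm_cast
    rw [Real.mul_self_sqrt (by norm_num : (0:ℝ) ≤ 2)]
    norm_num
  constructor
  · funext p
    obtain ⟨a, b, c⟩ := p
    fin_cases a <;> fin_cases b <;> fin_cases c <;>
      simp only [onQubit1, onQubits12, mulVec, dotProduct, tens12, tens3, tens2, PhiPlus,
        ket, Hg, CNOT, Xg, Zg, Fin.sum_univ_two, pow_zero, pow_one, Matrix.one_mul,
        Matrix.mul_one, Pi.smul_apply, Finset.sum_apply, smul_eq_mul, Pi.add_apply,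
        Matrix.smul_apply, Matrix.cons_val', Matrix.cons_val_zero, Matrix.cons_val_one,
        Matrix.head_cons, Matrix.head_fin_const, Matrix.empty_val',
        Matrix.cons_val_fin_one, Matrix.of_apply, Fintype.sum_prod_type, Prod.mk.injEq] <;>
      norm_num <;>
      first
        | (ring_nf;
           rw [show ((Real.sqrt 2 : ℂ))⁻¹ ^ 2 = ((Real.sqrt 2 : ℂ))⁻¹ * ((Real.sqrt 2 : ℂ))⁻¹
                 from sq _, hs]; ring1)
        | (split_ifs with h <;>
            first
              | ring1
              | (ring_nf;
                 rw [show ((Real.sqrt 2 : ℂ))⁻¹ ^ 2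
                       = ((Real.sqrt 2 : ℂ))⁻¹ * ((Real.sqrt 2 : ℂ))⁻¹ from sq _, hs]; ring1)
              | exact absurd h (by decide)
              | exact absurd (by decide) h)
  · intro a b
    funext i
    fin_cases a <;> fin_cases b <;> fin_cases i <;>
      simp [mulVec, dotProduct, Xg, Zg, Fin.sum_univ_two]

end
end

section
/- Pauli twirl of a single-qubit channel yields a Pauli channel: for every finite family (E_k) of 2×2 complex matrices and every 2×2 complex matrix ρ, (1/4) Σ_{l=0}^{3} P_l (Σ_k E_k (P_l ρ P_l) E_k†) P_l = Σ_{l=0}^{3} χ_l P_l ρ P_l, where χ_l = Σ_k |Tr(E_k P_l)|² / 4. -/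
/-!
Expand a Kraus operator in the Pauli basis, `E = ½ Σ_m Tr(E P_m) P_m`. Conjugation by `P_l`
multiplies `P_m` by a sign `s(l, m) = ±1`, and for `m ≠ n` the sign vectors `s(·, m)` and
`s(·, n)` are orthogonal. Hence twirling `ρ ↦ P_m ρ P_n` kills it when `m ≠ n` and fixes it when
`m = n`, and by bilinearity only the diagonal terms `|Tr(E P_m)|² / 4 · P_m ρ P_m` of the twirl of
`ρ ↦ E ρ E†` survive.
-/

open Matrix

noncomputable section

/-- The Pauli matrices `P₀ = I`, `P₁ = X`, `P₂ = Y`, `P₃ = Z`. -/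
def Pauli : Fin 4 → Matrix (Fin 2) (Fin 2) ℂ :=
  ![!![1, 0; 0, 1],
    !![0, 1; 1, 0],
    !![0, -Complex.I; Complex.I, 0],
    !![1, 0; 0, -1]]

open Finset

lemma conjTranspose_pauli (l : Fin 4) : (Pauli l)ᴴ = Pauli l := by
  fin_cases l <;> ext i j <;> fin_cases i <;> fin_cases j <;> simp [Pauli]

lemma sum_trace_mul_pauli_smul_pauli (A : Matrix (Fin 2) (Fin 2) ℂ) :
    ∑ m, ((A * Pauli m).trace / 2) • Pauli m = A := by
  ext i j
  fin_cases i <;> fin_cases j <;>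
    simp [Pauli, Matrix.mul_apply, Matrix.trace, Fin.sum_univ_two, Fin.sum_univ_four] <;>
    grind [Complex.I_sq]

/-- Distinct non-identity Pauli matrices anticommute. -/
def pauliSign (l m : Fin 4) : ℂ := if l = 0 ∨ m = 0 ∨ l = m then 1 else -1

lemma pauli_mul_pauli_mul_pauli (l m : Fin 4) :
    Pauli l * Pauli m * Pauli l = pauliSign l m • Pauli m := by
  fin_cases l <;> fin_cases m <;> ext i j <;> fin_cases i <;> fin_cases j <;>
    simp [Pauli, pauliSign, Matrix.mul_apply, Fin.sum_univ_two]

lemma sum_pauliSign_mul_pauliSign (m n : Fin 4) :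
    ∑ l, pauliSign l m * pauliSign l n = if m = n then 4 else 0 := by
  fin_cases m <;> fin_cases n <;> simp [pauliSign, Fin.sum_univ_four] <;> norm_num

/-- The Pauli twirl of the map `ρ ↦ A ρ B`, evaluated at `ρ`. -/
def pauliTwirl (A B ρ : Matrix (Fin 2) (Fin 2) ℂ) : Matrix (Fin 2) (Fin 2) ℂ :=
  (1 / 4 : ℂ) • ∑ l, Pauli l * (A * (Pauli l * ρ * Pauli l) * B) * Pauli l

lemma pauliTwirl_sum_smul_sum_smul {μ ν : Type*} [Fintype μ] [Fintype ν]
    (c : μ → ℂ) (X : μ → Matrix (Fin 2) (Fin 2) ℂ) (d : ν → ℂ) (Y : ν → Matrix (Fin 2) (Fin 2) ℂ)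
    (ρ : Matrix (Fin 2) (Fin 2) ℂ) :
    pauliTwirl (∑ m, c m • X m) (∑ n, d n • Y n) ρ =
      ∑ m, ∑ n, (c m * d n) • pauliTwirl (X m) (Y n) ρ := by
  simp only [pauliTwirl, sum_mul, mul_sum, smul_mul_assoc, Matrix.mul_smul, smul_sum, smul_smul]
  rw [sum_comm_cycle]
  refine sum_congr rfl fun m _ => sum_comm.trans ?_
  simp only [mul_comm (1 / 4 : ℂ)]

lemma pauliTwirl_pauli_pauli (m n : Fin 4) (ρ : Matrix (Fin 2) (Fin 2) ℂ) :
    pauliTwirl (Pauli m) (Pauli n) ρ = if m = n then Pauli m * ρ * Pauli m else 0 := by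
  have conj_pauli (l : Fin 4) :
      Pauli l * (Pauli m * (Pauli l * ρ * Pauli l) * Pauli n) * Pauli l =
        (pauliSign l m * pauliSign l n) • (Pauli m * ρ * Pauli n) :=
    calc _ = Pauli l * Pauli m * Pauli l * ρ * (Pauli l * Pauli n * Pauli l) := by
          simp only [Matrix.mul_assoc]
      _ = _ := by
          rw [pauli_mul_pauli_mul_pauli, pauli_mul_pauli_mul_pauli]
          simp only [smul_mul_assoc, Matrix.mul_smul, smul_smul]
  simp only [pauliTwirl, conj_pauli]
  rw [← sum_smul, sum_pauliSign_mul_pauliSign, smul_smul]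
  split_ifs with h
  · subst h
    norm_num
  · simp

lemma pauliTwirl_self_conjTranspose (A ρ : Matrix (Fin 2) (Fin 2) ℂ) :
    pauliTwirl A Aᴴ ρ = ∑ m, ((‖(A * Pauli m).trace‖ : ℂ) ^ 2 / 4) • (Pauli m * ρ * Pauli m) := by
  set c : Fin 4 → ℂ := fun m => (A * Pauli m).trace / 2
  have hA : A = ∑ m, c m • Pauli m := (sum_trace_mul_pauli_smul_pauli A).symm
  have hAH : Aᴴ = ∑ m, star (c m) • Pauli m := by
    conv_lhs => rw [hA]
    simp only [conjTranspose_sum, conjTranspose_smul, conjTranspose_pauli]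
  have hc (m : Fin 4) : c m * star (c m) = (‖(A * Pauli m).trace‖ : ℂ) ^ 2 / 4 := by
    rw [Complex.star_def, Complex.mul_conj', norm_div, Complex.norm_two]
    push_cast
    ring
  conv_lhs => rw [hAH, hA]
  simp only [pauliTwirl_sum_smul_sum_smul, pauliTwirl_pauli_pauli, smul_ite, smul_zero,
    sum_ite_eq, mem_univ, if_true, hc]

/-- **The Pauli twirl of a single-qubit channel is a Pauli channel**: for every finite family
`(E_k)` of 2×2 complex Kraus operators and every 2×2 complex matrix `ρ`,
`(1/4) Σ_l P_l (Σ_k E_k (P_l ρ P_l) E_k†) P_l = Σ_l χ_l P_l ρ P_l`, where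
`χ_l = Σ_k |Tr(E_k P_l)|² / 4`. -/
theorem pauli_twirl_is_pauli_channel {ι : Type*} [Fintype ι]
    (E : ι → Matrix (Fin 2) (Fin 2) ℂ) (ρ : Matrix (Fin 2) (Fin 2) ℂ) :
    ((1 : ℂ) / 4) • ∑ l : Fin 4,
        Pauli l * (∑ k, E k * (Pauli l * ρ * Pauli l) * (E k)ᴴ) * Pauli l =
      ∑ l : Fin 4,
        ((∑ k, (‖(E k * Pauli l).trace‖ : ℂ) ^ 2) / 4) • (Pauli l * ρ * Pauli l) := by
  have twirl_of_sum : ((1 : ℂ) / 4) • ∑ l : Fin 4,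
        Pauli l * (∑ k, E k * (Pauli l * ρ * Pauli l) * (E k)ᴴ) * Pauli l =
      ∑ k, pauliTwirl (E k) (E k)ᴴ ρ := by
    simp only [pauliTwirl, mul_sum, sum_mul, ← smul_sum]
    rw [sum_comm]
  rw [twirl_of_sum, sum_congr rfl fun k _ => pauliTwirl_self_conjTranspose (E k) ρ, sum_comm]
  simp only [sum_div, sum_smul]

end
end

section
/- The Pauli twirl approximation (PTA) of the combined amplitude and phase damping channel is the asymmetric Pauli channel: for all γ, λ ∈ [0,1] and every 2×2 complex matrix ρ, (1/4) Σ_{l=0}^{3} P_l N_APD(P_l ρ P_l) P_l = ((2 − γ + 2√(1−γ−(1−γ)λ))/4) ρ + (γ/4) XρX + (γ/4) YρY + ((2 − γ − 2√(1−γ−(1−γ)λ))/4) ZρZ. -/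
set_option maxHeartbeats 1000000

open Matrix

noncomputable section

/-- Kraus operators of the combined amplitude and phase damping channel with damping
parameter `γ` and scattering parameter `λ`. -/
def APD (γ l : ℝ) : Fin 3 → Matrix (Fin 2) (Fin 2) ℂ :=
  ![!![1, 0; 0, (Real.sqrt (1 - γ - (1 - γ) * l) : ℂ)],
    !![0, (Real.sqrt γ : ℂ); 0, 0],
    !![0, 0; 0, (Real.sqrt ((1 - γ) * l) : ℂ)]]

/-- The combined amplitude and phase damping channel
`N_APD(ρ) = E₀ ρ E₀† + E₁ ρ E₁† + E₂ ρ E₂†`. -/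
def NAPD (γ l : ℝ) (ρ : Matrix (Fin 2) (Fin 2) ℂ) : Matrix (Fin 2) (Fin 2) ℂ :=
  APD γ l 0 * ρ * (APD γ l 0)ᴴ + APD γ l 1 * ρ * (APD γ l 1)ᴴ +
    APD γ l 2 * ρ * (APD γ l 2)ᴴ

/-- **The Pauli twirl approximation (PTA) of the combined amplitude and phase damping
channel is the asymmetric Pauli channel**: for all `γ, λ ∈ [0,1]` and every 2×2 complex
matrix `ρ`, `(1/4) Σ_l P_l N_APD(P_l ρ P_l) P_l
 = ((2−γ+2√(1−γ−(1−γ)λ))/4) ρ + (γ/4) XρX + (γ/4) YρY + ((2−γ−2√(1−γ−(1−γ)λ))/4) ZρZ`. -/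
theorem pta_of_napd (γ l : ℝ) (hγ : γ ∈ Set.Icc (0 : ℝ) 1)
    (hl : l ∈ Set.Icc (0 : ℝ) 1) (ρ : Matrix (Fin 2) (Fin 2) ℂ) :
    ((1 : ℂ) / 4) • ∑ k : Fin 4, Pauli k * NAPD γ l (Pauli k * ρ * Pauli k) * Pauli k =
      (((2 - γ + 2 * Real.sqrt (1 - γ - (1 - γ) * l)) / 4 : ℝ) : ℂ) • ρ +
        ((γ / 4 : ℝ) : ℂ) • (Pauli 1 * ρ * Pauli 1) +
        ((γ / 4 : ℝ) : ℂ) • (Pauli 2 * ρ * Pauli 2) +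
        (((2 - γ - 2 * Real.sqrt (1 - γ - (1 - γ) * l)) / 4 : ℝ) : ℂ) •
          (Pauli 3 * ρ * Pauli 3) := by
  have h0 : (0:ℝ) ≤ γ := hγ.1
  have h1 : (0:ℝ) ≤ (1-γ)*l := mul_nonneg (by linarith [hγ.2]) hl.1
  have h2 : (0:ℝ) ≤ 1 - γ - (1-γ)*l := by nlinarith [hγ.2, hl.2, hγ.1, hl.1]
  have ha : ((Real.sqrt γ : ℂ)) * ((Real.sqrt γ : ℂ)) = (γ:ℂ) := by
    norm_cast; exact Real.mul_self_sqrt h0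
  have hb : ((Real.sqrt ((1-γ)*l) : ℂ)) * ((Real.sqrt ((1-γ)*l) : ℂ)) = ((1-γ)*l:ℝ) := by
    norm_cast; exact Real.mul_self_sqrt h1
  have hc : ((Real.sqrt (1-γ-(1-γ)*l) : ℂ)) * ((Real.sqrt (1-γ-(1-γ)*l) : ℂ))
      = ((1-γ-(1-γ)*l : ℝ):ℂ) := by
    norm_cast; exact Real.mul_self_sqrt h2
  have hI : Complex.I * Complex.I = -1 := Complex.I_mul_I
  ext i j
  simp only [NAPD, APD, Pauli, Fin.sum_univ_four, Matrix.smul_apply, Matrix.add_apply,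
    Matrix.mul_apply, Fin.sum_univ_two, Matrix.conjTranspose_apply,
    Matrix.cons_val', Matrix.cons_val_zero, Matrix.cons_val_one, Matrix.head_cons,
    Matrix.head_fin_const, Matrix.empty_val', Matrix.cons_val_fin_one,
    Matrix.of_apply, star_one, star_zero, RCLike.star_def, Matrix.cons_val_two, Matrix.cons_val_three, Matrix.tail_cons, _root_.map_one, _root_.map_zero, smul_eq_mul,
    Complex.conj_ofReal, map_neg, Complex.conj_I]
  set a := ((Real.sqrt γ : ℝ) : ℂ) with hadef
  set b := ((Real.sqrt ((1-γ)*l) : ℝ) : ℂ) with hbdef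
  set c := ((Real.sqrt (1-γ-(1-γ)*l) : ℝ) : ℂ) with hcdef
  fin_cases i <;> fin_cases j <;> simp only [Matrix.cons_val_zero, Matrix.cons_val_one,
    Matrix.head_cons, Fin.isValue, Fin.mk_zero, Fin.mk_one, Matrix.vecHead, Matrix.vecTail]
  · linear_combination (norm := (push_cast; ring))
      (ρ 0 0/2)*hb + (ρ 0 0/2)*hc + (ρ 1 1/2)*ha +
      ((ρ 0 0*(c*c+b*b)*(Complex.I*Complex.I-1)/4) + ρ 1 1*(γ:ℂ)/4)*hI
  · linear_combination (norm := (push_cast; ring))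
      (ρ 0 1*c*(Complex.I*Complex.I-1)/4 - (γ:ℂ)*ρ 1 0/4) * hI
  · linear_combination (norm := (push_cast; ring))
      (c*ρ 1 0*(Complex.I*Complex.I-1)/4 - (γ:ℂ)*ρ 0 1/4) * hI
  · linear_combination (norm := (push_cast; ring))
      (ρ 1 1/2)*hb + (ρ 1 1/2)*hc + (ρ 0 0/2)*ha +
      ((ρ 1 1 + ρ 0 0*(γ:ℂ))*(Complex.I*Complex.I-1)/4) * hI +
      (ρ 0 0*a*a*(Complex.I*Complex.I-1)/4 - ρ 0 0*(γ:ℂ)*(Complex.I*Complex.I-2)/4) * hI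

end
end

section
/- Knill-Laflamme theorem (quantum error correction conditions): let P be a d×d complex orthogonal projection matrix (P† = P, P² = P) and let (E_j)_{j∈J} be a finite family of d×d complex matrices with Σ_j E_j† E_j = I. Then there exists a finite family (R_i)_{i∈K} of d×d complex matrices with Σ_i R_i† R_i = I such that Σ_{i,j} R_i E_j ρ E_j† R_i† = ρ for every d×d complex matrix ρ with P ρ P = ρ, if and only if there exists a Hermitian matrix of complex numbers α = (α_{jk}) (i.e. α_{jk} = conj(α_{kj})) such that P E_j† E_k P = α_{jk} P for all j, k ∈ J. -/
/-!
If a recovery `R` undoes the noise on the code, the operators `R i * E j * P` of the composite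
channel satisfy `∑ (R i E j P) M (R i E j P)ᴴ = P M P` for every `M`. Read entrywise on matrix
units, this says that the rank-one operators `v vᴴ` of the vectorisations of the `R i E j P` sum
to that of `P`, which forces `R i E j P = c i j • P`; then `α j k = ∑ i, conj (c i j) * c i k`.

Conversely, diagonalising `α = U D Uᴴ` replaces the `E j` by the equivalent Kraus family
`F k = ∑ a, U a k • E a`, whose restrictions `G k = F k P` satisfy `G kᴴ G l = δ k l • d k • P`:
up to the factors `√(d k)` they map the code isometrically onto mutually orthogonal subspaces.
The recovery projects onto these subspaces and inverts the isometries: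
`R k = (√(d k))⁻¹ • G kᴴ` together with `1 - ∑ k, R kᴴ R k`.
-/

open Matrix
open scoped ComplexOrder

namespace Matrix

variable {𝕜 : Type*} [RCLike 𝕜]

theorem exists_smul_eq_of_sum_vecMulVec_eq {ι n : Type*} [Fintype ι] [Fintype n]
    {a : ι → n → 𝕜} {x : n → 𝕜}
    (h : ∑ q, vecMulVec (a q) (star (a q)) = vecMulVec x (star x)) (p : ι) :
    ∃ c : 𝕜, a p = c • x := by
  -- `w` is orthogonal to `x`, so testing `h` against `w` kills every `star (a q) ⬝ᵥ w`.
  set c := (star x ⬝ᵥ a p) / (star x ⬝ᵥ x)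
  set w := a p - c • x
  have hxw : star x ⬝ᵥ w = 0 := by
    by_cases hx : x = 0
    · simp [hx]
    · have : star x ⬝ᵥ x ≠ 0 := dotProduct_star_self_eq_zero.not.mpr hx
      simp only [w, c, dotProduct_sub, dotProduct_smul, smul_eq_mul, div_mul_cancel₀ _ this,
        sub_self]
  have quad : ∀ u : n → 𝕜,
      star w ⬝ᵥ (vecMulVec u (star u) *ᵥ w) = star (star u ⬝ᵥ w) * (star u ⬝ᵥ w) := by
    intro u
    rw [vecMulVec_mulVec, op_smul_eq_smul, dotProduct_smul, smul_eq_mul, mul_comm,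
      star_dotProduct]
  have hsum : star (fun q => star (a q) ⬝ᵥ w) ⬝ᵥ (fun q => star (a q) ⬝ᵥ w) = 0 := by
    have := congrArg (fun M => star w ⬝ᵥ (M *ᵥ w)) h
    simp only [quad, hxw, star_zero, mul_zero, Matrix.sum_mulVec, dotProduct_sum] at this
    simpa [dotProduct] using this
  have hap : star (a p) ⬝ᵥ w = 0 := congrFun (dotProduct_star_self_eq_zero.mp hsum) p
  have hww : star w ⬝ᵥ w = 0 := by
    rw [show star w = star (a p) - star c • star x by simp [w, star_sub, star_smul]]
    rw [sub_dotProduct, smul_dotProduct, hap, hxw, smul_zero, sub_zero]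
  exact ⟨c, sub_eq_zero.mp (dotProduct_star_self_eq_zero.mp hww)⟩

theorem exists_smul_eq_of_sum_mul_mul_conjTranspose_eq {ι m n : Type*} [Fintype ι] [Fintype m]
    [Fintype n] [DecidableEq n] {A : ι → Matrix m n 𝕜} {B : Matrix m n 𝕜}
    (h : ∀ M : Matrix n n 𝕜, ∑ q, A q * M * (A q)ᴴ = B * M * Bᴴ) (p : ι) :
    ∃ c : 𝕜, A p = c • B := by
  let vec : Matrix m n 𝕜 → m × n → 𝕜 := fun M x => M x.1 x.2
  have hvec : ∑ q, vecMulVec (vec (A q)) (star (vec (A q))) = vecMulVec (vec B) (star (vec B)) := by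
    ext ⟨i, a⟩ ⟨j, b⟩
    simpa [vec, Matrix.sum_apply, vecMulVec_apply, mul_apply, single_apply, ite_and, ite_mul]
      using congrFun₂ (h (single a b 1)) i j
  obtain ⟨c, hc⟩ := exists_smul_eq_of_sum_vecMulVec_eq hvec p
  exact ⟨c, Matrix.ext fun i a => congrFun hc (i, a)⟩

section Kraus

variable {ι κ l m n : Type*} [Fintype ι] [Fintype κ] [Fintype n]

def krausMap (E : ι → Matrix m n 𝕜) (ρ : Matrix n n 𝕜) : Matrix m m 𝕜 :=
  ∑ i, E i * ρ * (E i)ᴴ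

theorem krausMap_krausMap_eq_sum_sum [Fintype m] (R : κ → Matrix l m 𝕜) (E : ι → Matrix m n 𝕜)
    (ρ : Matrix n n 𝕜) :
    krausMap R (krausMap E ρ) = ∑ i, ∑ j, R i * E j * ρ * (E j)ᴴ * (R i)ᴴ := by
  simp only [krausMap, Matrix.mul_sum, Matrix.sum_mul]
  simp only [Matrix.mul_assoc]

theorem krausMap_krausMap [Fintype m] (R : κ → Matrix l m 𝕜) (E : ι → Matrix m n 𝕜)
    (ρ : Matrix n n 𝕜) :
    krausMap R (krausMap E ρ) = krausMap (fun p : κ × ι => R p.1 * E p.2) ρ := by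
  rw [krausMap_krausMap_eq_sum_sum]
  simp only [krausMap, Fintype.sum_prod_type, conjTranspose_mul, Matrix.mul_assoc]

theorem krausMap_mul_right [Fintype l] (E : ι → Matrix m n 𝕜) (B : Matrix n l 𝕜)
    (ρ : Matrix l l 𝕜) :
    krausMap (fun i => E i * B) ρ = krausMap E (B * ρ * Bᴴ) := by
  simp only [krausMap, conjTranspose_mul, Matrix.mul_assoc]

theorem krausMap_comp_equiv (E : ι → Matrix m n 𝕜) (e : κ ≃ ι) (ρ : Matrix n n 𝕜) :
    krausMap (E ∘ e) ρ = krausMap E ρ :=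
  e.sum_comp fun i => E i * ρ * (E i)ᴴ

theorem krausMap_unitary_mix [DecidableEq ι] {U : Matrix ι ι 𝕜} (hU : U * Uᴴ = 1)
    (E : ι → Matrix m n 𝕜) (ρ : Matrix n n 𝕜) :
    krausMap (fun k => ∑ a, U a k • E a) ρ = krausMap E ρ := by
  have hUU : ∀ a b, ∑ k, star (U b k) * U a k = if a = b then 1 else 0 := fun a b => by
    simpa [mul_apply, one_apply, mul_comm, eq_comm] using congrFun₂ hU a b
  calc ∑ k, (∑ a, U a k • E a) * ρ * (∑ b, U b k • E b)ᴴ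
      = ∑ b, ∑ a, (∑ k, star (U b k) * U a k) • (E a * ρ * (E b)ᴴ) := by
        simp only [conjTranspose_sum, conjTranspose_smul, Matrix.sum_mul, Matrix.mul_sum,
          Matrix.smul_mul, Matrix.mul_smul, Finset.smul_sum, smul_smul]
        rw [Finset.sum_comm]
        refine Finset.sum_congr rfl fun b _ => ?_
        rw [Finset.sum_comm]
        simp only [Finset.sum_smul]
    _ = ∑ b, E b * ρ * (E b)ᴴ := by
        simp only [hUU, ite_smul, one_smul, zero_smul, Finset.sum_ite_eq', Finset.mem_univ,
          if_true]

end Kraus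

theorem nonneg_of_conjTranspose_mul_self_eq_smul {m n : Type*} [Fintype m] [Fintype n]
    {A : Matrix m n 𝕜} {P : Matrix n n 𝕜} (hP : Pᴴ * P = P) (hP0 : P ≠ 0) {c : ℝ}
    (h : Aᴴ * A = (c : 𝕜) • P) : 0 ≤ c := by
  have htrA : 0 ≤ (c : 𝕜) * P.trace := by
    rw [← smul_eq_mul, ← trace_smul, ← h]
    exact (posSemidef_conjTranspose_mul_self A).trace_nonneg
  have htrP : 0 < P.trace := by
    rw [← hP]
    exact (posSemidef_conjTranspose_mul_self P).trace_nonneg.lt_of_ne'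
      (trace_conjTranspose_mul_self_eq_zero_iff.not.mpr hP0)
  have hre := (RCLike.nonneg_iff.mp htrA).1
  rw [RCLike.re_ofReal_mul] at hre
  exact nonneg_of_mul_nonneg_left hre (RCLike.pos_iff.mp htrP).1

theorem sum_smul_mul_conjTranspose_mul_sum_smul_mul {ι κ n : Type*} [Fintype ι] [Fintype n]
    {P : Matrix n n 𝕜} (hP : Pᴴ = P) {E : ι → Matrix n n 𝕜} {α : ι → ι → 𝕜}
    (hα : ∀ a b, P * (E a)ᴴ * E b * P = α a b • P) (V : Matrix ι κ 𝕜) (k l : κ) :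
    ((∑ a, V a k • E a) * P)ᴴ * ((∑ b, V b l • E b) * P) = (Vᴴ * of α * V) k l • P := by
  calc ((∑ a, V a k • E a) * P)ᴴ * ((∑ b, V b l • E b) * P)
      = ∑ a, ∑ b, (star (V a k) * V b l) • (P * (E a)ᴴ * E b * P) := by
        simp only [conjTranspose_mul, hP, conjTranspose_sum, conjTranspose_smul, Matrix.sum_mul,
          Matrix.mul_sum, Matrix.smul_mul, Matrix.mul_smul, Finset.smul_sum, smul_smul,
          Matrix.mul_assoc]
        rw [Finset.sum_comm]
        exact Finset.sum_congr rfl fun a _ => Finset.sum_congr rfl fun b _ => by rw [mul_comm]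
    _ = (Vᴴ * of α * V) k l • P := by
        simp only [hα, smul_smul, ← Finset.sum_smul, mul_apply, conjTranspose_apply, of_apply,
          Finset.sum_mul]
        rw [Finset.sum_comm]
        exact congrArg (· • P) (Finset.sum_congr rfl fun a _ => Finset.sum_congr rfl
          fun b _ => by ring)

section Recovery

variable {n K : Type*}

/- Through the junk values `√μ = 0` for `μ ≤ 0` and `0⁻¹ = 0`, `correctionOp G μ k` vanishes
when `μ k = 0`, which is exactly when `G k = 0`. -/
noncomputable def correctionOp (G : K → Matrix n n 𝕜) (μ : K → ℝ) (k : K) : Matrix n n 𝕜 :=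
  ((√(μ k) : ℝ) : 𝕜)⁻¹ • (G k)ᴴ

theorem conjTranspose_correctionOp (G : K → Matrix n n 𝕜) (μ : K → ℝ) (k : K) :
    (correctionOp G μ k)ᴴ = ((√(μ k) : ℝ) : 𝕜)⁻¹ • G k := by
  simp [correctionOp, conjTranspose_smul]

variable [Fintype n] [Fintype K]

noncomputable def errorSpaceProj (G : K → Matrix n n 𝕜) (μ : K → ℝ) : Matrix n n 𝕜 :=
  ∑ k, (correctionOp G μ k)ᴴ * correctionOp G μ k

theorem conjTranspose_errorSpaceProj (G : K → Matrix n n 𝕜) (μ : K → ℝ) :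
    (errorSpaceProj G μ)ᴴ = errorSpaceProj G μ := by
  simp [errorSpaceProj, conjTranspose_sum, conjTranspose_mul]

noncomputable def recoveryOps [DecidableEq n] (G : K → Matrix n n 𝕜) (μ : K → ℝ) :
    Option K → Matrix n n 𝕜 :=
  fun o => o.elim (1 - errorSpaceProj G μ) (correctionOp G μ)

variable [DecidableEq K] {P : Matrix n n 𝕜} {G : K → Matrix n n 𝕜} {μ : K → ℝ}
  (hG : ∀ k l, (G k)ᴴ * G l = if k = l then (μ k : 𝕜) • P else 0)
include hG

omit [Fintype K] in
theorem correctionOp_mul (k l : K) :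
    correctionOp G μ k * G l = if k = l then ((√(μ k) : ℝ) : 𝕜) • P else 0 := by
  rw [correctionOp, Matrix.smul_mul, hG]
  split_ifs
  · rw [smul_smul, ← RCLike.ofReal_inv, ← RCLike.ofReal_mul, inv_mul_eq_div, Real.div_sqrt]
  · rw [smul_zero]

variable (hμ : ∀ k, 0 ≤ μ k) (hGP : ∀ k, G k * P = G k)
include hμ hGP

theorem errorSpaceProj_mul (l : K) : errorSpaceProj G μ * G l = G l := by
  calc errorSpaceProj G μ * G l = ∑ k, (correctionOp G μ k)ᴴ * (correctionOp G μ k * G l) := by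
        simp only [errorSpaceProj, Matrix.sum_mul, Matrix.mul_assoc]
    _ = (correctionOp G μ l)ᴴ * (((√(μ l) : ℝ) : 𝕜) • P) := by
        simp only [correctionOp_mul hG, mul_ite, Matrix.mul_zero, Finset.sum_ite_eq',
          Finset.mem_univ, if_true]
    _ = (((√(μ l) : ℝ) : 𝕜)⁻¹ * ((√(μ l) : ℝ) : 𝕜)) • G l := by
        rw [conjTranspose_correctionOp, Matrix.smul_mul, Matrix.mul_smul, hGP, smul_smul]
    _ = G l := by
        rcases (hμ l).eq_or_lt with hμl | hμl
        · have hGl : G l = 0 :=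
            conjTranspose_mul_self_eq_zero.mp (by rw [hG, if_pos rfl, ← hμl]; simp)
          rw [hGl, smul_zero]
        · rw [inv_mul_cancel₀ (by exact_mod_cast (Real.sqrt_pos.mpr hμl).ne'), one_smul]

theorem errorSpaceProj_mul_self :
    errorSpaceProj G μ * errorSpaceProj G μ = errorSpaceProj G μ := by
  have hQ : ∀ k, errorSpaceProj G μ * (correctionOp G μ k)ᴴ = (correctionOp G μ k)ᴴ := by
    intro k
    rw [conjTranspose_correctionOp, Matrix.mul_smul, errorSpaceProj_mul hG hμ hGP]
  calc errorSpaceProj G μ * errorSpaceProj G μ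
      = ∑ k, errorSpaceProj G μ * (correctionOp G μ k)ᴴ * correctionOp G μ k := by
        rw [errorSpaceProj, Matrix.mul_sum]
        simp only [Matrix.mul_assoc]
    _ = errorSpaceProj G μ := by simp only [hQ]; rfl

theorem sum_conjTranspose_recoveryOps_mul [DecidableEq n] :
    ∑ o, (recoveryOps G μ o)ᴴ * recoveryOps G μ o = 1 := by
  rw [Fintype.sum_option]
  simp only [recoveryOps, Option.elim, conjTranspose_sub, conjTranspose_one,
    conjTranspose_errorSpaceProj, Matrix.sub_mul, Matrix.mul_sub, Matrix.one_mul,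
    Matrix.mul_one, errorSpaceProj_mul_self hG hμ hGP]
  rw [← errorSpaceProj]
  abel

theorem krausMap_recoveryOps_krausMap [DecidableEq n] (hP₁ : Pᴴ = P) (hP₂ : P * P = P)
    (hμP : (∑ k, (μ k : 𝕜)) • P = P) {ρ : Matrix n n 𝕜} (hρ : P * ρ * P = ρ) :
    krausMap (recoveryOps G μ) (krausMap G ρ) = ρ := by
  have hnone : ∀ k, recoveryOps G μ none * G k = 0 := fun k => by
    simp [recoveryOps, Matrix.sub_mul, errorSpaceProj_mul hG hμ hGP]
  have hsome : ∀ l k, recoveryOps G μ (some l) * G k * ρ * (recoveryOps G μ (some l) * G k)ᴴ =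
      if l = k then (μ l : 𝕜) • ρ else 0 := by
    intro l k
    simp only [recoveryOps, Option.elim, correctionOp_mul hG]
    split_ifs
    · rw [conjTranspose_smul, hP₁, Matrix.smul_mul, Matrix.smul_mul, Matrix.mul_smul, smul_smul,
        hρ, RCLike.star_def, RCLike.conj_ofReal, ← RCLike.ofReal_mul,
        Real.mul_self_sqrt (hμ l)]
    · simp
  have hPρ : P * ρ = ρ := by rw [← hρ, ← Matrix.mul_assoc, ← Matrix.mul_assoc, hP₂]
  calc krausMap (recoveryOps G μ) (krausMap G ρ)
      = ∑ o, ∑ k, recoveryOps G μ o * G k * ρ * (recoveryOps G μ o * G k)ᴴ := by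
        rw [krausMap_krausMap, krausMap, Fintype.sum_prod_type]
    _ = ∑ l, (μ l : 𝕜) • ρ := by
        simp only [Fintype.sum_option, hnone, hsome, Matrix.zero_mul, Finset.sum_const_zero,
          zero_add, Finset.sum_ite_eq, Finset.mem_univ, if_true]
    _ = ρ := by rw [← Finset.sum_smul, ← hPρ, ← Matrix.smul_mul, hμP, hPρ]

end Recovery

theorem exists_knillLaflamme_of_recovery {n J ι : Type*} [Fintype n] [DecidableEq n] [Fintype J]
    [Fintype ι] {P : Matrix n n 𝕜} (hP₁ : Pᴴ = P) (hP₂ : P * P = P) {E : J → Matrix n n 𝕜}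
    {R : ι → Matrix n n 𝕜} (hR : ∑ i, (R i)ᴴ * R i = 1)
    (hrec : ∀ ρ, P * ρ * P = ρ → krausMap R (krausMap E ρ) = ρ) :
    ∃ α : J → J → 𝕜, (∀ j k, α j k = star (α k j)) ∧
      ∀ j k, P * (E j)ᴴ * E k * P = α j k • P := by
  have hcode : ∀ M, krausMap (fun p : ι × J => R p.1 * E p.2 * P) M = P * M * Pᴴ := by
    intro M
    have hM : P * (P * M * P) * P = P * M * P := by
      simp only [← Matrix.mul_assoc, hP₂]
      rw [Matrix.mul_assoc _ P P, hP₂]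
    rw [krausMap_mul_right (fun p : ι × J => R p.1 * E p.2), ← krausMap_krausMap, hP₁,
      hrec _ hM]
  choose c hc using exists_smul_eq_of_sum_mul_mul_conjTranspose_eq hcode
  have hc' : ∀ i j, R i * E j * P = c (i, j) • P := fun i j => hc (i, j)
  refine ⟨fun j k => ∑ i, star (c (i, j)) * c (i, k), fun j k => ?_, fun j k => ?_⟩
  · simp only [star_sum, star_mul, star_star, mul_comm]
  · calc P * (E j)ᴴ * E k * P = ∑ i, (R i * E j * P)ᴴ * (R i * E k * P) := by
          simp only [conjTranspose_mul, hP₁, Matrix.mul_assoc, ← Matrix.mul_sum]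
          simp only [← Matrix.mul_assoc, ← Matrix.sum_mul, hR, Matrix.mul_one]
      _ = (∑ i, star (c (i, j)) * c (i, k)) • P := by
          simp only [hc', conjTranspose_smul, hP₁, Matrix.smul_mul, Matrix.mul_smul, smul_smul, hP₂,
            Finset.sum_smul, mul_comm]

theorem exists_recovery_of_knillLaflamme {n J : Type*} [Fintype n] [DecidableEq n] [Fintype J]
    [DecidableEq J] {P : Matrix n n 𝕜} (hP₁ : Pᴴ = P) (hP₂ : P * P = P) {E : J → Matrix n n 𝕜}
    (hE : ∑ j, (E j)ᴴ * E j = 1) {α : J → J → 𝕜} (hα : ∀ j k, α j k = star (α k j))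
    (hαE : ∀ j k, P * (E j)ᴴ * E k * P = α j k • P) :
    ∃ R : Option J → Matrix n n 𝕜, ∑ o, (R o)ᴴ * R o = 1 ∧
      ∀ ρ, P * ρ * P = ρ → krausMap R (krausMap E ρ) = ρ := by
  rcases eq_or_ne P 0 with rfl | hP0
  · refine ⟨fun o => o.elim 1 0, by simp [Fintype.sum_option], fun ρ hρ => ?_⟩
    rw [← hρ]
    simp [krausMap]
  have hA : (of α).IsHermitian := by
    ext j k
    exact (hα j k).symm
  set U := (hA.eigenvectorUnitary : Matrix J J 𝕜)
  set μ := hA.eigenvalues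
  have hU : U * Uᴴ = 1 := by
    rw [← star_eq_conjTranspose]
    exact Unitary.mul_star_self_of_mem hA.eigenvectorUnitary.2
  have hdiag : Uᴴ * of α * U = diagonal fun k => (μ k : 𝕜) := by
    have := hA.conjStarAlgAut_star_eigenvectorUnitary
    rwa [Unitary.conjStarAlgAut_star_apply] at this
  set G := fun k => (∑ a, U a k • E a) * P
  have hG : ∀ k l, (G k)ᴴ * G l = if k = l then (μ k : 𝕜) • P else 0 := by
    intro k l
    rw [sum_smul_mul_conjTranspose_mul_sum_smul_mul hP₁ hαE, hdiag, diagonal_apply]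
    split_ifs <;> simp
  have hμ : ∀ k, 0 ≤ μ k := fun k =>
    nonneg_of_conjTranspose_mul_self_eq_smul (by rw [hP₁, hP₂]) hP0 (by rw [hG, if_pos rfl])
  have hGP : ∀ k, G k * P = G k := fun k => by simp only [G, Matrix.mul_assoc, hP₂]
  have hμP : (∑ k, (μ k : 𝕜)) • P = P := by
    calc (∑ k, (μ k : 𝕜)) • P = ∑ j, P * (E j)ᴴ * E j * P := by
          rw [← hA.trace_eq_sum_eigenvalues, trace, Finset.sum_smul]
          simp only [diag_apply, of_apply, hαE]
      _ = P * (∑ j, (E j)ᴴ * E j) * P := by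
          rw [Matrix.mul_sum, Matrix.sum_mul]
          simp only [Matrix.mul_assoc]
      _ = P := by rw [hE, Matrix.mul_one, hP₂]
  refine ⟨recoveryOps G μ, sum_conjTranspose_recoveryOps_mul hG hμ hGP, fun ρ hρ => ?_⟩
  have hGE : krausMap G ρ = krausMap E ρ := by
    rw [krausMap_mul_right, hP₁, hρ, krausMap_unitary_mix hU]
  rw [← hGE]
  exact krausMap_recoveryOps_krausMap hG hμ hGP hP₁ hP₂ hμP hρ

end Matrix

/-- **Knill–Laflamme theorem (quantum error correction conditions)**: let `P` be a `d×d`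
complex orthogonal projection and `(E_j)` a finite trace-preserving Kraus family.  There
exists a finite trace-preserving recovery family `(R_i)` with
`Σ_{i,j} R_i E_j ρ E_j† R_i† = ρ` for every `ρ` with `PρP = ρ`, if and only if there exists
a Hermitian matrix `α` of complex numbers with `P E_j† E_k P = α_{jk} P` for all `j, k`. -/
theorem knill_laflamme {d : ℕ} {J : Type} [Fintype J]
    (P : Matrix (Fin d) (Fin d) ℂ) (hP₁ : Pᴴ = P) (hP₂ : P * P = P)
    (E : J → Matrix (Fin d) (Fin d) ℂ)
    (hE : ∑ j, (E j)ᴴ * E j = 1) :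
    (∃ (m : ℕ) (R : Fin m → Matrix (Fin d) (Fin d) ℂ),
        (∑ i, (R i)ᴴ * R i = 1) ∧
        ∀ ρ : Matrix (Fin d) (Fin d) ℂ, P * ρ * P = ρ →
          ∑ i, ∑ j, R i * E j * ρ * (E j)ᴴ * (R i)ᴴ = ρ) ↔
    (∃ α : J → J → ℂ, (∀ j k, α j k = star (α k j)) ∧
        ∀ j k, P * (E j)ᴴ * E k * P = α j k • P) := by
  simp only [← krausMap_krausMap_eq_sum_sum]
  constructor
  · rintro ⟨m, R, hR, hrec⟩
    exact exists_knillLaflamme_of_recovery hP₁ hP₂ hR hrec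
  · rintro ⟨α, hα, hαE⟩
    classical
    obtain ⟨R, hR, hrec⟩ := exists_recovery_of_knillLaflamme hP₁ hP₂ hE hα hαE
    let e := (Fintype.equivFin (Option J)).symm
    refine ⟨Fintype.card (Option J), R ∘ e, ?_, fun ρ hρ => ?_⟩
    · rw [← hR, ← e.sum_comp]
      rfl
    · rw [krausMap_comp_equiv, hrec ρ hρ]
end

section
/- Discretization of errors: let P be a d×d complex orthogonal projection matrix (P† = P, P² = P), let (E_j)_{j∈J} be a finite family of d×d complex matrices with Σ_j E_j† E_j = I, and let (R_i)_{i∈K} be a finite family of d×d complex matrices with Σ_i R_i† R_i = I such that Σ_{i,j} R_i E_j ρ E_j† R_i† = ρ for every d×d complex matrix ρ with P ρ P = ρ. Suppose (F_k)_{k∈L} is another finite family with Σ_k F_k† F_k = I whose members are linear combinations of the E_j, i.e. F_k = Σ_j ξ_{kj} E_j for complex numbers ξ_{kj}. Then the same recovery corrects the new noise process: Σ_{i,k} R_i F_k ρ F_k† R_i† = ρ for every d×d complex matrix ρ with P ρ P = ρ. -/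
/-!
Restricted to the code, the corrected channel `ρ ↦ Σ_{i,j} R_i E_j ρ E_j† R_i†` is the identity,
so its Kraus operators `R_i E_j P` have the Choi matrix `vec P vec P†` of rank one; hence every
`R_i E_j P` is a scalar multiple of `P`. By linearity so is every `R_i F_k P = ν_{ik} P`, and
`R ∘ F` then acts on the code as multiplication by `Σ |ν_{ik}|²`, which trace preservation of
`R` and `F` forces to be `1`.
-/

open Matrix

open scoped InnerProductSpace

theorem Submodule.mem_span_singleton_of_forall_inner_eq_zero {𝕜 E : Type*} [RCLike 𝕜]
    [NormedAddCommGroup E] [InnerProductSpace 𝕜 E] {p b : E}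
    (h : ∀ z, ⟪z, p⟫_𝕜 = 0 → ⟪z, b⟫_𝕜 = 0) : b ∈ 𝕜 ∙ p := by
  rw [← (𝕜 ∙ p).orthogonal_orthogonal]
  exact fun z hz => h z (mem_orthogonal_singleton_iff_inner_left.mp hz)

section VecMulVec

variable {𝕜 ι m : Type*} [RCLike 𝕜] [Fintype ι] [Fintype m]

theorem star_dotProduct_vecMulVec_mulVec (x z : m → 𝕜) :
    star z ⬝ᵥ (vecMulVec x (star x) *ᵥ z) = (‖star z ⬝ᵥ x‖ ^ 2 : ℝ) := by
  rw [vecMulVec_mulVec, star_dotProduct x z, RCLike.ofReal_pow, ← RCLike.mul_conj]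
  simp [dotProduct_smul, mul_comm]

theorem exists_eq_smul_of_sum_vecMulVec_eq {b : ι → m → 𝕜} {p : m → 𝕜}
    (h : ∑ a, vecMulVec (b a) (star (b a)) = vecMulVec p (star p)) (a : ι) :
    ∃ c : 𝕜, b a = c • p := by
  have hnorm (z : m → 𝕜) : ∑ a, ‖star z ⬝ᵥ b a‖ ^ 2 = ‖star z ⬝ᵥ p‖ ^ 2 := by
    apply RCLike.ofReal_injective (K := 𝕜)
    rw [← star_dotProduct_vecMulVec_mulVec, ← h, sum_mulVec, dotProduct_sum, RCLike.ofReal_sum]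
    simp only [star_dotProduct_vecMulVec_mulVec]
  have hspan : WithLp.toLp 2 (b a) ∈ 𝕜 ∙ (WithLp.toLp 2 p : EuclideanSpace 𝕜 m) := by
    refine Submodule.mem_span_singleton_of_forall_inner_eq_zero fun z hz => ?_
    rw [EuclideanSpace.inner_eq_star_dotProduct, dotProduct_comm] at hz ⊢
    have hsum := hnorm z.ofLp
    rw [hz, norm_zero, zero_pow two_ne_zero] at hsum
    simpa using (Finset.sum_eq_zero_iff_of_nonneg (fun _ _ => by positivity)).mp hsum a
  obtain ⟨c, hc⟩ := Submodule.mem_span_singleton.mp hspan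
  exact ⟨c, congr_arg WithLp.ofLp hc.symm⟩

end VecMulVec

section Kraus

variable {α n : Type*} [CommRing α] [StarRing α] [Fintype n]

theorem mul_single_mul_conjTranspose_apply [DecidableEq n] (C : Matrix n n α) (x y p q : n) :
    (C * single y x (1 : α) * Cᴴ) p q = vecMulVec (vec C) (star (vec C)) (y, p) (x, q) := by
  simp [mul_apply, single, vecMulVec_apply, vec, ite_and]

theorem sum_vecMulVec_vec_eq_of_forall_sum_sandwich_eq [DecidableEq n] {ι : Type*} [Fintype ι]
    {B : ι → Matrix n n α} {P : Matrix n n α}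
    (h : ∀ σ, ∑ a, B a * σ * (B a)ᴴ = P * σ * Pᴴ) :
    ∑ a, vecMulVec (vec (B a)) (star (vec (B a))) = vecMulVec (vec P) (star (vec P)) := by
  ext ⟨y, p⟩ ⟨x, q⟩
  simpa [Matrix.sum_apply, mul_single_mul_conjTranspose_apply] using
    congr_fun₂ (h (single y x 1)) p q

theorem mul_mul_sandwich_of_conjTranspose_eq {P : Matrix n n α} (hP : Pᴴ = P)
    (A B σ : Matrix n n α) :
    A * B * (P * σ * P) * Bᴴ * Aᴴ = (A * B * P) * σ * (A * B * P)ᴴ := by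
  simp only [conjTranspose_mul, hP, Matrix.mul_assoc]

theorem sum_conjTranspose_mul_mul_eq_one [DecidableEq n] {K L : Type*} [Fintype K]
    [Fintype L] {R : K → Matrix n n α} {F : L → Matrix n n α}
    (hR : ∑ i, (R i)ᴴ * R i = 1) (hF : ∑ k, (F k)ᴴ * F k = 1) :
    ∑ ik : K × L, (R ik.1 * F ik.2)ᴴ * (R ik.1 * F ik.2) = 1 := by
  calc ∑ ik : K × L, (R ik.1 * F ik.2)ᴴ * (R ik.1 * F ik.2)
      = ∑ k, (F k)ᴴ * (∑ i, (R i)ᴴ * R i) * F k := by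
        simp only [Fintype.sum_prod_type_right, conjTranspose_mul, Matrix.mul_sum,
          Matrix.sum_mul, Matrix.mul_assoc]
    _ = 1 := by simp only [hR, Matrix.mul_one, hF]

theorem sum_sandwich_eq_self_of_mem_span_singleton {ι : Type*} [Fintype ι] {P : Matrix n n α}
    (hP₁ : Pᴴ = P) (hP₂ : P * P = P) {C : ι → Matrix n n α} (hC : ∀ a, C a ∈ α ∙ P)
    (hsum : ∑ a, (C a)ᴴ * C a = P) {ρ : Matrix n n α} (hρ : P * ρ * P = ρ) :
    ∑ a, C a * ρ * (C a)ᴴ = ρ := by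
  choose ν hν using fun a => Submodule.mem_span_singleton.mp (hC a)
  have hscale : (∑ a, star (ν a) * ν a) • P = P := by
    conv_rhs => rw [← hsum]
    simp_rw [Finset.sum_smul, ← hν, conjTranspose_smul, hP₁, smul_mul_smul, hP₂]
  calc ∑ a, C a * ρ * (C a)ᴴ = (∑ a, star (ν a) * ν a) • (P * ρ * P) := by
        simp_rw [Finset.sum_smul, ← hν, conjTranspose_smul, hP₁, smul_mul_assoc, mul_smul_comm,
          smul_smul, mul_comm (ν _)]
    _ = ρ := by rw [← smul_mul_assoc, ← smul_mul_assoc, hscale, hρ]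

theorem sum_conjTranspose_mul_mul_eq_conjTranspose_mul {ι : Type*} [Fintype ι] [DecidableEq n]
    {C : ι → Matrix n n α} (hC : ∑ a, (C a)ᴴ * C a = 1) (P : Matrix n n α) :
    ∑ a, (C a * P)ᴴ * (C a * P) = Pᴴ * P := by
  calc ∑ a, (C a * P)ᴴ * (C a * P) = Pᴴ * (∑ a, (C a)ᴴ * C a) * P := by
        simp only [conjTranspose_mul, Matrix.mul_sum, Matrix.sum_mul, Matrix.mul_assoc]
    _ = Pᴴ * P := by rw [hC, Matrix.mul_one]

end Kraus

theorem mem_span_singleton_of_forall_sum_sandwich_eq {𝕜 ι n : Type*} [RCLike 𝕜] [Fintype ι]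
    [Fintype n] [DecidableEq n] {B : ι → Matrix n n 𝕜} {P : Matrix n n 𝕜}
    (h : ∀ σ, ∑ a, B a * σ * (B a)ᴴ = P * σ * Pᴴ) (a : ι) : B a ∈ 𝕜 ∙ P := by
  obtain ⟨c, hc⟩ :=
    exists_eq_smul_of_sum_vecMulVec_eq (sum_vecMulVec_vec_eq_of_forall_sum_sandwich_eq h) a
  exact Submodule.mem_span_singleton.mpr ⟨c, vec_inj.mp (by rw [vec_smul, hc])⟩

theorem discretization_of_errors_general {d : ℕ} {J K L : Type}
    [Fintype J] [Fintype K] [Fintype L]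
    (P : Matrix (Fin d) (Fin d) ℂ) (hP₁ : Pᴴ = P) (hP₂ : P * P = P)
    (E : J → Matrix (Fin d) (Fin d) ℂ)
    (R : K → Matrix (Fin d) (Fin d) ℂ) (hR : ∑ i, (R i)ᴴ * R i = 1)
    (hcorr : ∀ ρ : Matrix (Fin d) (Fin d) ℂ, P * ρ * P = ρ →
      ∑ i, ∑ j, R i * E j * ρ * (E j)ᴴ * (R i)ᴴ = ρ)
    (F : L → Matrix (Fin d) (Fin d) ℂ) (hF : ∑ k, (F k)ᴴ * F k = 1)
    (ξ : L → J → ℂ) (hξ : ∀ k, F k = ∑ j, ξ k j • E j) :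
    ∀ ρ : Matrix (Fin d) (Fin d) ℂ, P * ρ * P = ρ →
      ∑ i, ∑ k, R i * F k * ρ * (F k)ᴴ * (R i)ᴴ = ρ := by
  intro ρ hρ
  have hcode (σ : Matrix (Fin d) (Fin d) ℂ) :
      ∑ ij : K × J, R ij.1 * E ij.2 * P * σ * (R ij.1 * E ij.2 * P)ᴴ = P * σ * Pᴴ := by
    have hσ : P * (P * σ * P) * P = P * σ * P := by
      simp only [← Matrix.mul_assoc, hP₂]
      simp only [Matrix.mul_assoc, hP₂]
    rw [Fintype.sum_prod_type, hP₁, ← hcorr _ hσ]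
    simp_rw [mul_mul_sandwich_of_conjTranspose_eq hP₁]
  have hRE (i : K) (j : J) : R i * E j * P ∈ ℂ ∙ P :=
    mem_span_singleton_of_forall_sum_sandwich_eq hcode (i, j)
  have hRF (ik : K × L) : R ik.1 * F ik.2 * P ∈ ℂ ∙ P := by
    rw [hξ ik.2, Matrix.mul_sum, Matrix.sum_mul]
    refine Submodule.sum_mem _ fun j _ => ?_
    simpa only [mul_smul_comm, smul_mul_assoc] using Submodule.smul_mem _ (ξ ik.2 j) (hRE ik.1 j)
  have htp : ∑ ik : K × L, (R ik.1 * F ik.2 * P)ᴴ * (R ik.1 * F ik.2 * P) = P := by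
    rw [sum_conjTranspose_mul_mul_eq_conjTranspose_mul (sum_conjTranspose_mul_mul_eq_one hR hF),
      hP₁, hP₂]
  calc ∑ i, ∑ k, R i * F k * ρ * (F k)ᴴ * (R i)ᴴ
      = ∑ ik : K × L, R ik.1 * F ik.2 * P * ρ * (R ik.1 * F ik.2 * P)ᴴ := by
        rw [Fintype.sum_prod_type]
        conv_lhs => rw [← hρ]
        simp_rw [mul_mul_sandwich_of_conjTranspose_eq hP₁]
    _ = ρ := sum_sandwich_eq_self_of_mem_span_singleton hP₁ hP₂ hRF htp hρ

/-- **Discretization of errors**: if the recovery family `(R_i)` corrects the noise process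
with Kraus family `(E_j)` on the code given by the projector `P`, and `(F_k)` is another
trace-preserving Kraus family whose members are linear combinations of the `E_j`, then the
same recovery corrects the noise process `(F_k)`:
`Σ_{i,k} R_i F_k ρ F_k† R_i† = ρ` for every `ρ` with `PρP = ρ`. -/
theorem discretization_of_errors {d : ℕ} {J K L : Type}
    [Fintype J] [Fintype K] [Fintype L]
    (P : Matrix (Fin d) (Fin d) ℂ) (hP₁ : Pᴴ = P) (hP₂ : P * P = P)
    (E : J → Matrix (Fin d) (Fin d) ℂ) (hE : ∑ j, (E j)ᴴ * E j = 1)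
    (R : K → Matrix (Fin d) (Fin d) ℂ) (hR : ∑ i, (R i)ᴴ * R i = 1)
    (hcorr : ∀ ρ : Matrix (Fin d) (Fin d) ℂ, P * ρ * P = ρ →
      ∑ i, ∑ j, R i * E j * ρ * (E j)ᴴ * (R i)ᴴ = ρ)
    (F : L → Matrix (Fin d) (Fin d) ℂ) (hF : ∑ k, (F k)ᴴ * F k = 1)
    (ξ : L → J → ℂ) (hξ : ∀ k, F k = ∑ j, ξ k j • E j) :
    ∀ ρ : Matrix (Fin d) (Fin d) ℂ, P * ρ * P = ρ →
      ∑ i, ∑ k, R i * F k * ρ * (F k)ᴴ * (R i)ᴴ = ρ :=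
  discretization_of_errors_general P hP₁ hP₂ E R hR hcorr F hF ξ hξ
end
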